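/- arXiv:2501.12359 — 4 statements merged into one kernel-verified Lean document; each statement's English description precedes it below -/
import Mathlib

section
/- Let γ > 0, let ρ and σ be states on ℂ^n, and let 𝓜 be a set of measurement operators (each M ∈ 𝓜 satisfies 0 ≤ M ≤ I) whose symmetrized set 𝓜₂ is nonempty. Then E_γ^𝓜(ρ‖σ) = γ · E_{1/γ}^𝓜(σ‖ρ). -/
noncomputable section
open Matrix ComplexOrder

/-- Square complex matrices of size `n`. -/
abbrev Mat (n : ℕ) := Matrix (Fin n) (Fin n) ℂ

/-- A quantum state: positive semidefinite with unit trace. -/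
def IsState {n : ℕ} (ρ : Mat n) : Prop := ρ.PosSemidef ∧ ρ.trace = 1

/-- The symmetrized measurement set 𝓜₂ := {M ∈ 𝓜 : I − M ∈ 𝓜}. -/
def M2 {n : ℕ} (𝓜 : Set (Mat n)) : Set (Mat n) := {M | M ∈ 𝓜 ∧ (1 - M) ∈ 𝓜}

/-- Measured hockey-stick divergence for γ ≥ 0:
`E_γ^𝓜(ρ‖σ) = sup_{M ∈ 𝓜₂} Tr[M(ρ − γσ)] − max{0, 1 − γ}`. -/
def Emeas {n : ℕ} (γ : ℝ) (𝓜 : Set (Mat n)) (ρ σ : Mat n) : ℝ :=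
  sSup ((fun M => ((M * (ρ - (γ : ℂ) • σ)).trace).re) '' M2 𝓜) - max 0 (1 - γ)

/-!
Complementing the measurement, `M ↦ 1 - M`, maps `𝓜₂` onto itself, and for states
`γ · Tr[(1 - M)(σ - γ⁻¹ρ)] = Tr[M(ρ - γσ)] + γ - 1`. Hence the two suprema differ by an increasing
affine change of variable, and the offsets `max{0, 1 - γ}` and `γ · max{0, 1 - 1/γ}` absorb the
constant `γ - 1`.
-/

def hsObjective {n : ℕ} (γ : ℝ) (ρ σ M : Mat n) : ℝ := ((M * (ρ - (γ : ℂ) • σ)).trace).re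

lemma Emeas_eq_sSup_hsObjective {n : ℕ} (γ : ℝ) (𝓜 : Set (Mat n)) (ρ σ : Mat n) :
    Emeas γ 𝓜 ρ σ = sSup (hsObjective γ ρ σ '' M2 𝓜) - max 0 (1 - γ) := rfl

lemma hsObjective_eq {n : ℕ} (γ : ℝ) (ρ σ M : Mat n) :
    hsObjective γ ρ σ M = (M * ρ).trace.re - γ * (M * σ).trace.re := by
  simp only [hsObjective, mul_sub, mul_smul_comm, trace_sub, trace_smul, smul_eq_mul,
    Complex.sub_re, Complex.re_ofReal_mul]

lemma re_trace_one_sub_mul {ι : Type*} [Fintype ι] [DecidableEq ι] {ρ : Matrix ι ι ℂ}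
    (hρ : ρ.trace = 1) (M : Matrix ι ι ℂ) : ((1 - M) * ρ).trace.re = 1 - (M * ρ).trace.re := by
  rw [sub_mul, one_mul, trace_sub, hρ, Complex.sub_re, Complex.one_re]

open scoped MatrixOrder in
lemma re_trace_mul_nonneg {ι : Type*} [Fintype ι] [DecidableEq ι] {A B : Matrix ι ι ℂ}
    (hA : A.PosSemidef) (hB : B.PosSemidef) : 0 ≤ (A * B).trace.re := by
  have hS : (CFC.sqrt A).PosSemidef := (CFC.sqrt_nonneg A).posSemidef
  have hSBS : 0 ≤ (CFC.sqrt A * B * CFC.sqrt A).trace := by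
    simpa only [hS.isHermitian.eq] using (hB.mul_mul_conjTranspose_same (CFC.sqrt A)).trace_nonneg
  rw [← CFC.sqrt_mul_sqrt_self A hA.nonneg, mul_assoc, trace_mul_comm]
  exact (Complex.le_def.mp hSBS).1

lemma hsObjective_le_one {n : ℕ} {γ : ℝ} (hγ : 0 ≤ γ) {ρ σ M : Mat n} (hρ : IsState ρ)
    (hσ : σ.PosSemidef) (hM : M.PosSemidef) (hM' : (1 - M).PosSemidef) :
    hsObjective γ ρ σ M ≤ 1 := by
  have hMσ := re_trace_mul_nonneg hM hσ
  have hMρ := re_trace_one_sub_mul hρ.2 M ▸ re_trace_mul_nonneg hM' hρ.1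
  rw [hsObjective_eq]
  nlinarith

lemma hsObjective_eq_one_sub_swap {n : ℕ} {γ : ℝ} (hγ : γ ≠ 0) {ρ σ : Mat n} (hρ : ρ.trace = 1)
    (hσ : σ.trace = 1) (M : Mat n) :
    hsObjective γ ρ σ M = γ * hsObjective (1 / γ) σ ρ (1 - M) + (1 - γ) := by
  rw [hsObjective_eq, hsObjective_eq, re_trace_one_sub_mul hρ, re_trace_one_sub_mul hσ]
  field_simp
  ring

lemma one_sub_mem_M2 {n : ℕ} {𝓜 : Set (Mat n)} {M : Mat n} (hM : M ∈ M2 𝓜) : 1 - M ∈ M2 𝓜 :=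
  ⟨hM.2, by rw [sub_sub_cancel]; exact hM.1⟩

lemma image_one_sub_M2 {n : ℕ} (𝓜 : Set (Mat n)) : (fun M => 1 - M) '' M2 𝓜 = M2 𝓜 :=
  Set.Subset.antisymm (Set.image_subset_iff.2 fun _ => one_sub_mem_M2)
    fun M hM => ⟨1 - M, one_sub_mem_M2 hM, sub_sub_cancel 1 M⟩

lemma Real.sSup_image_mul_add {s : Set ℝ} (hne : s.Nonempty) (hbdd : BddAbove s) {a : ℝ}
    (ha : 0 ≤ a) (b : ℝ) : sSup ((fun x => a * x + b) '' s) = a * sSup s + b :=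
  (Monotone.map_csSup_of_continuousAt (by fun_prop)
    (fun _ _ h => by gcongr) hne hbdd).symm

lemma mul_max_zero_one_sub_one_div {γ : ℝ} (hγ : 0 < γ) :
    γ * max 0 (1 - 1 / γ) = max 0 (γ - 1) := by
  rw [mul_max_of_nonneg _ _ hγ.le]
  field_simp
  simp

theorem stmt_0 {n : ℕ} (γ : ℝ) (hγ : 0 < γ) (ρ σ : Mat n)
    (hρ : IsState ρ) (hσ : IsState σ) (𝓜 : Set (Mat n))
    (h𝓜 : ∀ M ∈ 𝓜, M.PosSemidef ∧ ((1 : Mat n) - M).PosSemidef)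
    (hne : (M2 𝓜).Nonempty) :
    Emeas γ 𝓜 ρ σ = γ * Emeas (1 / γ) 𝓜 σ ρ := by
  set f := hsObjective γ ρ σ
  set g := hsObjective (1 / γ) σ ρ
  have hbdd : BddAbove (g '' M2 𝓜) := ⟨1, Set.forall_mem_image.2 fun M hM =>
    hsObjective_le_one (by positivity) hσ hρ.1 (h𝓜 M hM.1).1 (h𝓜 M hM.1).2⟩
  have hf : f '' M2 𝓜 = (fun x => γ * x + (1 - γ)) '' (g '' M2 𝓜) := by
    conv_rhs => rw [← image_one_sub_M2, Set.image_image, Set.image_image]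
    exact Set.image_congr fun M _ => hsObjective_eq_one_sub_swap hγ.ne' hρ.2 hσ.2 M
  rw [Emeas_eq_sSup_hsObjective, Emeas_eq_sSup_hsObjective, hf,
    Real.sSup_image_mul_add (hne.image g) hbdd hγ.le, mul_sub, mul_max_zero_one_sub_one_div hγ]
  grind
end
end

section
/- Let γ ≥ 0, let ρ and σ be states on ℂ^n, and let 𝓜 be a set of measurement operators (each M ∈ 𝓜 satisfies 0 ≤ M ≤ I) whose symmetrized set 𝓜₂ is nonempty. Let Φ and Ψ be linear maps on n×n complex matrices such that: Φ is trace-preserving and positive (maps positive semidefinite matrices to positive semidefinite matrices), Ψ is the Hilbert–Schmidt adjoint of Φ (i.e., Tr[Ψ(M) X] = Tr[M Φ(X)] for all matrices M, X), and Ψ(M) ∈ 𝓜 for all M ∈ 𝓜. Then E_γ^𝓜(Φ(ρ)‖Φ(σ)) ≤ E_γ^𝓜(ρ‖σ). -/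
/-!
Because `Φ` is trace preserving, its adjoint `Ψ` is unital, so together with `Ψ 𝓜 ⊆ 𝓜` it maps
`𝓜₂` into itself. Since `Tr[M Φ(ρ - γσ)] = Tr[Ψ(M) (ρ - γσ)]`, every value in the supremum
defining `E_γ^𝓜(Φρ‖Φσ)` also occurs in the one defining `E_γ^𝓜(ρ‖σ)`. Both suprema are finite:
for `0 ≤ M ≤ 1` and `H = X + Xᴴ`, `2 Re Tr[M X] = Tr[M H] ≤ Tr[M H⁺] ≤ Tr[H⁺]`.
-/

noncomputable section
open Matrix ComplexOrder

namespace Matrix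

variable {ι : Type*} [Fintype ι]

theorem re_trace_mul_conjTranspose {M : Matrix ι ι ℂ} (hM : M.IsHermitian) (X : Matrix ι ι ℂ) :
    (M * Xᴴ).trace.re = (M * X).trace.re := by
  rw [← hM.eq, ← conjTranspose_mul, trace_conjTranspose, trace_mul_comm, hM.eq]
  rfl

variable [DecidableEq ι]

open scoped MatrixOrder in
theorem PosSemidef.trace_mul_nonneg {A B : Matrix ι ι ℂ} (hA : A.PosSemidef) (hB : B.PosSemidef) :
    0 ≤ (A * B).trace := by
  have hsqrt : (A * B).trace = (CFC.sqrt B * A * (CFC.sqrt B)ᴴ).trace := by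
    rw [(CFC.sqrt_nonneg B).posSemidef.isHermitian.eq, trace_mul_cycle,
      CFC.sqrt_mul_sqrt_self B hB.nonneg, trace_mul_comm]
  exact hsqrt ▸ (hA.mul_mul_conjTranspose_same _).trace_nonneg

theorem re_trace_mul_le_re_trace {M P : Matrix ι ι ℂ} (hM : (1 - M).PosSemidef)
    (hP : P.PosSemidef) : (M * P).trace.re ≤ P.trace.re := by
  have h := Complex.nonneg_iff.mp (hM.trace_mul_nonneg hP)
  simp only [sub_mul, one_mul, trace_sub, Complex.sub_re] at h
  linarith [h.1]

open scoped MatrixOrder in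
theorem re_trace_mul_le_re_trace_posPart {M H : Matrix ι ι ℂ} (hM₀ : M.PosSemidef)
    (hM₁ : (1 - M).PosSemidef) (hH : H.IsHermitian) : (M * H).trace.re ≤ (H⁺).trace.re := by
  have hneg : 0 ≤ (M * H⁻).trace.re :=
    (Complex.nonneg_iff.mp (hM₀.trace_mul_nonneg (CFC.negPart_nonneg H).posSemidef)).1
  calc (M * H).trace.re = (M * H⁺).trace.re - (M * H⁻).trace.re := by
        rw [← Complex.sub_re, ← trace_sub, ← mul_sub, CFC.posPart_sub_negPart H hH.isSelfAdjoint]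
    _ ≤ (H⁺).trace.re := by
        linarith [re_trace_mul_le_re_trace hM₁ (CFC.posPart_nonneg H).posSemidef]

open scoped MatrixOrder in
theorem bddAbove_re_trace_mul {S : Set (Matrix ι ι ℂ)}
    (hS : ∀ M ∈ S, M.PosSemidef ∧ (1 - M).PosSemidef) (X : Matrix ι ι ℂ) :
    BddAbove ((fun M => (M * X).trace.re) '' S) := by
  refine ⟨((X + Xᴴ)⁺).trace.re / 2, ?_⟩
  rintro _ ⟨M, hM, rfl⟩
  have h := re_trace_mul_le_re_trace_posPart (hS M hM).1 (hS M hM).2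
    (isHermitian_add_transpose_self X)
  rw [mul_add, trace_add, Complex.add_re, re_trace_mul_conjTranspose (hS M hM).1.isHermitian] at h
  dsimp only
  linarith

end Matrix

section Compatible

variable {ι : Type*} [Fintype ι] {Φ Ψ : Matrix ι ι ℂ →ₗ[ℂ] Matrix ι ι ℂ}

theorem image_re_trace_mul_map_subset (hAdj : ∀ M X, (Ψ M * X).trace = (M * Φ X).trace)
    {S : Set (Matrix ι ι ℂ)} (hΨ : Set.MapsTo Ψ S S) (X : Matrix ι ι ℂ) :
    (fun M => (M * Φ X).trace.re) '' S ⊆ (fun M => (M * X).trace.re) '' S := by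
  rintro _ ⟨M, hM, rfl⟩
  exact ⟨Ψ M, hΨ hM, congrArg Complex.re (hAdj M X)⟩

variable [DecidableEq ι]

theorem map_one_of_adjoint_trace_preserving (hTP : ∀ X, (Φ X).trace = X.trace)
    (hAdj : ∀ M X, (Ψ M * X).trace = (M * Φ X).trace) : Ψ 1 = 1 :=
  ext_iff_trace_mul_right.mpr fun X => by rw [hAdj, one_mul, one_mul, hTP]

end Compatible

theorem mapsTo_M2 {n : ℕ} {𝓜 : Set (Mat n)} {Ψ : Mat n →ₗ[ℂ] Mat n} (hΨ1 : Ψ 1 = 1)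
    (hΨ : Set.MapsTo Ψ 𝓜 𝓜) : Set.MapsTo Ψ (M2 𝓜) (M2 𝓜) := fun M ⟨hM, hM'⟩ =>
  ⟨hΨ hM, by simpa only [map_sub, hΨ1] using hΨ hM'⟩

theorem stmt_3_general {n : ℕ} (γ : ℝ) (ρ σ : Mat n) (𝓜 : Set (Mat n))
    (h𝓜 : ∀ M ∈ 𝓜, M.PosSemidef ∧ ((1 : Mat n) - M).PosSemidef)
    (hne : (M2 𝓜).Nonempty)
    (Φ Ψ : Mat n →ₗ[ℂ] Mat n)
    (hTP : ∀ X : Mat n, (Φ X).trace = X.trace)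
    (hAdj : ∀ (M X : Mat n), ((Ψ M) * X).trace = (M * Φ X).trace)
    (hCompat : ∀ M ∈ 𝓜, Ψ M ∈ 𝓜) :
    Emeas γ 𝓜 (Φ ρ) (Φ σ) ≤ Emeas γ 𝓜 ρ σ := by
  have hΦ : Φ ρ - (γ : ℂ) • Φ σ = Φ (ρ - (γ : ℂ) • σ) := by rw [map_sub, map_smul]
  have hΨ : Set.MapsTo Ψ (M2 𝓜) (M2 𝓜) :=
    mapsTo_M2 (map_one_of_adjoint_trace_preserving hTP hAdj) fun M hM => hCompat M hM
  unfold Emeas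
  rw [hΦ]
  exact sub_le_sub_right (csSup_le_csSup (bddAbove_re_trace_mul (fun M hM => h𝓜 M hM.1) _)
    (hne.image _) (image_re_trace_mul_map_subset hAdj hΨ _)) _

/-- Data processing under 𝓜-compatible channels: if `Φ` is a positive trace-preserving map
whose Hilbert–Schmidt adjoint `Ψ` maps 𝓜 into 𝓜, then the measured hockey-stick divergence
does not increase under `Φ`. -/
theorem stmt_3 {n : ℕ} (γ : ℝ) (hγ : 0 ≤ γ) (ρ σ : Mat n)
    (hρ : IsState ρ) (hσ : IsState σ) (𝓜 : Set (Mat n))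
    (h𝓜 : ∀ M ∈ 𝓜, M.PosSemidef ∧ ((1 : Mat n) - M).PosSemidef)
    (hne : (M2 𝓜).Nonempty)
    (Φ Ψ : Mat n →ₗ[ℂ] Mat n)
    (hTP : ∀ X : Mat n, (Φ X).trace = X.trace)
    (hPos : ∀ X : Mat n, X.PosSemidef → (Φ X).PosSemidef)
    (hAdj : ∀ (M X : Mat n), ((Ψ M) * X).trace = (M * Φ X).trace)
    (hCompat : ∀ M ∈ 𝓜, Ψ M ∈ 𝓜) :
    Emeas γ 𝓜 (Φ ρ) (Φ σ) ≤ Emeas γ 𝓜 ρ σ :=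
  stmt_3_general γ ρ σ 𝓜 h𝓜 hne Φ Ψ hTP hAdj hCompat
end
end

section
/- Let d ≥ 2, p, q ∈ [0,1], and γ ≥ 1. For the isotropic states ζ^q and ζ^p on ℂ^d ⊗ ℂ^d, the hockey-stick divergence satisfies E_γ(ζ^q‖ζ^p) = max{0, q − γp, (1−q) − γ(1−p)}. -/
noncomputable section
open Matrix ComplexOrder

/-- Bipartite complex matrices on ℂ^d ⊗ ℂ^d. -/
abbrev BMat (d : ℕ) := Matrix (Fin d × Fin d) (Fin d × Fin d) ℂ

/-- The maximally entangled state `Φ = (1/d) Σ_{i,j} |i⟩⟨j| ⊗ |i⟩⟨j|`. -/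
def maxEnt (d : ℕ) : BMat d :=
  fun p q => if p.1 = p.2 ∧ q.1 = q.2 then ((d : ℂ))⁻¹ else 0

/-- The orthogonal complement state `Φ⊥ = (I − Φ)/(d² − 1)`. -/
def maxEntPerp (d : ℕ) : BMat d := (((d : ℂ) ^ 2 - 1))⁻¹ • (1 - maxEnt d)

/-- The isotropic state `ζ^p = pΦ + (1−p)Φ⊥`. -/
def iso (d : ℕ) (p : ℝ) : BMat d := (p : ℂ) • maxEnt d + ((1 - p : ℝ) : ℂ) • maxEntPerp d

/-- Hockey-stick divergence (all measurements) for γ ≥ 1. -/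
def Eg {d : ℕ} (γ : ℝ) (ρ σ : BMat d) : ℝ :=
  sSup {x : ℝ | ∃ M : BMat d, M.PosSemidef ∧ ((1 : BMat d) - M).PosSemidef ∧
    x = ((M * (ρ - (γ : ℂ) • σ)).trace).re}

/-!
Write `ζ^q - γ ζ^p = a Φ + b Φ⊥` with `a = q - γ p` and `b = (1 - q) - γ (1 - p)`, where `Φ` and
`1 - Φ` are complementary projections. For an effect `0 ≤ M ≤ 1` both `Tr[M Φ]` and `Tr[M Φ⊥]` lie
in `[0, 1]`, so `Tr[M (ζ^q - γ ζ^p)] ≤ max a 0 + max b 0`, with equality for one of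
`M = 0, Φ, 1 - Φ, 1`. Since `a + b = 1 - γ ≤ 0`, at most one of `a`, `b` is positive.
-/

lemma le_max_zero_mul {α x X : ℝ} (hx : x ∈ Set.Icc 0 X) : α * x ≤ max α 0 * X := by
  rcases le_total α 0 with hα | hα
  · nlinarith [max_eq_right hα, hx.1, hx.1.trans hx.2]
  · nlinarith [max_eq_left hα, hx.1, hx.2]

lemma exists_mem_Icc_mul_eq_max_zero (α : ℝ) : ∃ c ∈ Set.Icc (0 : ℝ) 1, c * α = max α 0 := by
  rcases le_total α 0 with hα | hα
  · exact ⟨0, by norm_num, by simp [hα]⟩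
  · exact ⟨1, by norm_num, by simp [hα]⟩

lemma max_zero_add_max_zero_of_add_nonpos {a b : ℝ} (h : a + b ≤ 0) :
    max a 0 + max b 0 = max 0 (max a b) := by
  grind

namespace Matrix

variable {n : Type*} [Fintype n]

section Projection

variable {P : Matrix n n ℂ} (hP : P.IsHermitian) (hPP : IsIdempotentElem P)
include hP hPP

lemma posSemidef_of_isIdempotentElem : P.PosSemidef := by
  simpa [hP.eq, hPP.eq] using posSemidef_conjTranspose_mul_self P

lemma re_trace_mul_nonneg_of_isIdempotentElem {M : Matrix n n ℂ} (hM : M.PosSemidef) :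
    0 ≤ (M * P).trace.re := by
  have hPMP : (Pᴴ * M * P).PosSemidef := hM.conjTranspose_mul_mul_same P
  have htr : (Pᴴ * M * P).trace = (M * P).trace := by
    rw [hP.eq, trace_mul_cycle, hPP.eq, trace_mul_comm]
  exact (Complex.nonneg_iff.mp (htr ▸ hPMP.trace_nonneg)).1

variable [DecidableEq n]

lemma re_trace_mul_mem_Icc_of_isIdempotentElem {M : Matrix n n ℂ} (hM : M.PosSemidef)
    (hM₁ : (1 - M).PosSemidef) : (M * P).trace.re ∈ Set.Icc 0 P.trace.re := by
  refine ⟨re_trace_mul_nonneg_of_isIdempotentElem hP hPP hM, ?_⟩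
  have h := re_trace_mul_nonneg_of_isIdempotentElem hP hPP hM₁
  rw [sub_mul, one_mul, trace_sub, Complex.sub_re] at h
  linarith

end Projection

variable [DecidableEq n]

def effectValues (Δ : Matrix n n ℂ) : Set ℝ :=
  {x | ∃ M : Matrix n n ℂ, M.PosSemidef ∧ (1 - M).PosSemidef ∧ x = (M * Δ).trace.re}

/-- The optimal effect is the projection onto the eigenspaces of `α P + β (1 - P)` with positive
eigenvalue. -/
theorem isGreatest_effectValues_smul_add_smul_one_sub {P : Matrix n n ℂ} (hP : P.IsHermitian)
    (hPP : IsIdempotentElem P) (α β : ℝ) :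
    IsGreatest (effectValues ((α : ℂ) • P + (β : ℂ) • (1 - P)))
      (max α 0 * P.trace.re + max β 0 * (1 - P).trace.re) := by
  have hQ : (1 - P).IsHermitian := isHermitian_one.sub hP
  have hQQ : IsIdempotentElem (1 - P) := hPP.one_sub
  have hPQ : P * (1 - P) = 0 := hPP.mul_one_sub_self
  have hQP : (1 - P) * P = 0 := hPP.one_sub_mul_self
  constructor
  · obtain ⟨c₁, hc₁, hc₁α⟩ := exists_mem_Icc_mul_eq_max_zero α
    obtain ⟨c₂, hc₂, hc₂β⟩ := exists_mem_Icc_mul_eq_max_zero β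
    have hpsd : ∀ s t : ℝ, 0 ≤ s → 0 ≤ t → ((s : ℂ) • P + (t : ℂ) • (1 - P)).PosSemidef :=
      fun s t hs ht =>
        ((posSemidef_of_isIdempotentElem hP hPP).smul (by exact_mod_cast hs)).add
          ((posSemidef_of_isIdempotentElem hQ hQQ).smul (by exact_mod_cast ht))
    refine ⟨(c₁ : ℂ) • P + (c₂ : ℂ) • (1 - P), hpsd c₁ c₂ hc₁.1 hc₂.1, ?_, ?_⟩
    · have h := hpsd (1 - c₁) (1 - c₂) (by linarith [hc₁.2]) (by linarith [hc₂.2])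
      convert h using 1
      push_cast
      module
    · simp only [add_mul, mul_add, smul_mul_smul, hPP.eq, hQQ.eq, hPQ, hQP, smul_zero,
        add_zero, zero_add, trace_add, trace_smul, smul_eq_mul, Complex.add_re,
        ← Complex.ofReal_mul, Complex.re_ofReal_mul, hc₁α, hc₂β]
  · rintro x ⟨M, hM, hM₁, rfl⟩
    have hP' := re_trace_mul_mem_Icc_of_isIdempotentElem hP hPP hM hM₁
    have hQ' := re_trace_mul_mem_Icc_of_isIdempotentElem hQ hQQ hM hM₁
    simp only [mul_add, Matrix.mul_smul, trace_add, trace_smul, smul_eq_mul, Complex.add_re,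
      Complex.re_ofReal_mul]
    exact add_le_add (le_max_zero_mul hP') (le_max_zero_mul hQ')

end Matrix

open Matrix

section MaxEnt

variable {d : ℕ}

lemma isHermitian_maxEnt : (maxEnt d).IsHermitian := by
  ext p q
  simp only [conjTranspose_apply, maxEnt]
  split_ifs <;> simp_all [and_comm]

lemma sum_ite_fst_eq_snd (c : ℂ) : (∑ r : Fin d × Fin d, if r.1 = r.2 then c else 0) = d * c := by
  simp [Fintype.sum_prod_type, Finset.sum_ite_eq]

lemma isIdempotentElem_maxEnt (hd : d ≠ 0) : IsIdempotentElem (maxEnt d) := by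
  ext p q
  simp only [mul_apply, maxEnt]
  by_cases h : p.1 = p.2 ∧ q.1 = q.2
  · simp only [h, true_and, and_true, ite_zero_mul_ite_zero, and_self, sum_ite_fst_eq_snd,
      if_true]
    field_simp
  · rw [if_neg h]
    refine Finset.sum_eq_zero fun r _ => ?_
    rcases not_and_or.mp h with h' | h' <;> simp [h']

lemma trace_maxEnt (hd : d ≠ 0) : (maxEnt d).trace = 1 := by
  simp only [trace, diag, maxEnt, and_self, sum_ite_fst_eq_snd]
  field_simp

lemma re_trace_one_sub_maxEnt (hd : d ≠ 0) : (1 - maxEnt d).trace.re = (d : ℝ) ^ 2 - 1 := by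
  simp [trace_sub, trace_maxEnt hd, Fintype.card_prod, sq]

lemma iso_sub_smul_iso (p q γ : ℝ) :
    iso d q - (γ : ℂ) • iso d p =
      ((q - γ * p : ℝ) : ℂ) • maxEnt d +
        (((1 - q - γ * (1 - p)) / ((d : ℝ) ^ 2 - 1) : ℝ) : ℂ) • (1 - maxEnt d) := by
  simp only [iso, maxEntPerp]
  push_cast
  module

end MaxEnt

theorem stmt_12_general (d : ℕ) (hd : 2 ≤ d) (p q : ℝ)
    (γ : ℝ) (hγ : 1 ≤ γ) :
    Eg γ (iso d q) (iso d p) =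
      max 0 (max (q - γ * p) ((1 - q) - γ * (1 - p))) := by
  have hd0 : d ≠ 0 := by omega
  have hD : (0 : ℝ) < (d : ℝ) ^ 2 - 1 := by
    have : (2 : ℝ) ≤ d := by exact_mod_cast hd
    nlinarith
  have hgreatest := isGreatest_effectValues_smul_add_smul_one_sub isHermitian_maxEnt
    (isIdempotentElem_maxEnt hd0) (q - γ * p) ((1 - q - γ * (1 - p)) / ((d : ℝ) ^ 2 - 1))
  rw [Eg, iso_sub_smul_iso, ← effectValues, hgreatest.csSup_eq, trace_maxEnt hd0,
    re_trace_one_sub_maxEnt hd0, Complex.one_re, mul_one, max_mul_of_nonneg _ _ hD.le,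
    div_mul_cancel₀ _ hD.ne', zero_mul]
  exact max_zero_add_max_zero_of_add_nonpos (by linarith)

/-- Hockey-stick divergence for isotropic states. -/
theorem stmt_12 (d : ℕ) (hd : 2 ≤ d) (p q : ℝ)
    (hp : p ∈ Set.Icc (0 : ℝ) 1) (hq : q ∈ Set.Icc (0 : ℝ) 1)
    (γ : ℝ) (hγ : 1 ≤ γ) :
    Eg γ (iso d q) (iso d p) =
      max 0 (max (q - γ * p) ((1 - q) - γ * (1 - p))) :=
  stmt_12_general d hd p q γ hγ
end
end

section
/- Let d ≥ 2 and let M be a matrix on ℂ^d ⊗ ℂ^d satisfying 0 ≤ M ≤ I and 0 ≤ T_B(M) ≤ I (a PPT measurement operator). Let Π_sym := (I + F)/2 and Π_asym := (I − F)/2 be the projections onto the symmetric and antisymmetric subspaces, where F is the swap operator. Then Tr[M Π_asym] ≤ Tr[M Π_sym] ≤ Tr[M Π_asym] + d. -/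
/-!
Since `Π_sym = Π_asym + F`, both inequalities say `0 ≤ Tr[M F] ≤ d`. Writing out the entries,
`Tr[M F] = ⟨Γ|T_B(M)|Γ⟩`, so the bounds follow from `0 ≤ T_B(M) ≤ I` and `⟨Γ|Γ⟩ = d`.
-/

noncomputable section
open Matrix ComplexOrder

/-- The swap operator `F = Σ_{i,j} |i⟩⟨j| ⊗ |j⟩⟨i|`. -/
def swapOp (d : ℕ) : BMat d :=
  fun p q => if p.1 = q.2 ∧ p.2 = q.1 then 1 else 0

/-- The projection onto the symmetric subspace, `Π_sym = (I + F)/2`. -/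
def projSym (d : ℕ) : BMat d := (2 : ℂ)⁻¹ • (1 + swapOp d)

/-- The projection onto the antisymmetric subspace, `Π_asym = (I − F)/2`. -/
def projAsym (d : ℕ) : BMat d := (2 : ℂ)⁻¹ • (1 - swapOp d)

/-- The partial transpose on the second tensor factor:
`T_B(M)((a,b),(a',b')) := M((a,b'),(a',b))`. -/
def ptB {d : ℕ} (M : BMat d) : BMat d :=
  fun p q => M (p.1, q.2) (q.1, p.2)

namespace BMat

/-- The unnormalized maximally entangled vector `|Γ⟩ = Σ_i |i⟩|i⟩`. -/
def gammaVec (d : ℕ) : Fin d × Fin d → ℂ := fun p => if p.1 = p.2 then 1 else 0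

lemma star_gammaVec_dotProduct_mulVec (d : ℕ) (N : BMat d) :
    star (gammaVec d) ⬝ᵥ N *ᵥ gammaVec d = ∑ i, ∑ j, N (i, i) (j, j) := by
  simp [dotProduct, mulVec, gammaVec, Fintype.sum_prod_type, Finset.mul_sum,
    ite_mul, apply_ite]

lemma star_gammaVec_dotProduct_one_mulVec (d : ℕ) :
    star (gammaVec d) ⬝ᵥ (1 : BMat d) *ᵥ gammaVec d = d := by
  rw [star_gammaVec_dotProduct_mulVec]
  simp [one_apply, Prod.ext_iff]

lemma trace_mul_swapOp (d : ℕ) (M : BMat d) :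
    (M * swapOp d).trace = ∑ i, ∑ j, M (i, j) (j, i) := by
  simp [trace, mul_apply, swapOp, Fintype.sum_prod_type, ite_and]

lemma trace_mul_swapOp_eq_ptB (d : ℕ) (M : BMat d) :
    (M * swapOp d).trace = star (gammaVec d) ⬝ᵥ ptB M *ᵥ gammaVec d := by
  rw [star_gammaVec_dotProduct_mulVec, trace_mul_swapOp]
  rfl

lemma projSym_eq_projAsym_add_swapOp (d : ℕ) : projSym d = projAsym d + swapOp d := by
  unfold projSym projAsym
  module

lemma trace_mul_projSym (d : ℕ) (M : BMat d) :
    (M * projSym d).trace = (M * projAsym d).trace + (M * swapOp d).trace := by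
  rw [projSym_eq_projAsym_add_swapOp, mul_add, trace_add]

lemma trace_mul_swapOp_nonneg {d : ℕ} {M : BMat d} (hMT : (ptB M).PosSemidef) :
    0 ≤ (M * swapOp d).trace := by
  rw [trace_mul_swapOp_eq_ptB]
  exact hMT.dotProduct_mulVec_nonneg _

lemma trace_mul_swapOp_le {d : ℕ} {M : BMat d} (hMT1 : ((1 : BMat d) - ptB M).PosSemidef) :
    (M * swapOp d).trace ≤ d := by
  have h := hMT1.dotProduct_mulVec_nonneg (gammaVec d)
  rwa [sub_mulVec, dotProduct_sub, star_gammaVec_dotProduct_one_mulVec,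
    ← trace_mul_swapOp_eq_ptB, sub_nonneg] at h

end BMat

theorem stmt_18_general (d : ℕ) (M : BMat d)
    (hMT : (ptB M).PosSemidef) (hMT1 : ((1 : BMat d) - ptB M).PosSemidef) :
    ((M * projAsym d).trace).re ≤ ((M * projSym d).trace).re ∧
    ((M * projSym d).trace).re ≤ ((M * projAsym d).trace).re + d := by
  have h0 : 0 ≤ ((M * swapOp d).trace).re := by
    simpa using Complex.re_le_re (BMat.trace_mul_swapOp_nonneg hMT)
  have h1 : ((M * swapOp d).trace).re ≤ d := by
    simpa using Complex.re_le_re (BMat.trace_mul_swapOp_le hMT1)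
  rw [BMat.trace_mul_projSym, Complex.add_re]
  constructor <;> linarith

/-- For any PPT measurement operator `M`,
`Tr[M Π_asym] ≤ Tr[M Π_sym] ≤ Tr[M Π_asym] + d`. -/
theorem stmt_18 (d : ℕ) (hd : 2 ≤ d) (M : BMat d)
    (hM : M.PosSemidef) (hM1 : ((1 : BMat d) - M).PosSemidef)
    (hMT : (ptB M).PosSemidef) (hMT1 : ((1 : BMat d) - ptB M).PosSemidef) :
    ((M * projAsym d).trace).re ≤ ((M * projSym d).trace).re ∧
    ((M * projSym d).trace).re ≤ ((M * projAsym d).trace).re + d :=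
  stmt_18_general d M hMT hMT1
end
end
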